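/- Let q(t), p(t), Q(t), P(t) solve Hagedorn's equations q̇ = p/m, ṗ = −∇V(q), Q̇ = P/m, Ṗ = −∇²V(q)Q in dimension d = 3, with V rotationally invariant (V(Rx) = V(x) for all R ∈ SO(3)). Then the complex 3×3 matrix 𝒥(t) := q(t)^ P(t) − p(t)^ Q(t) is constant in t, where v^ denotes the hat map (antisymmetric matrix of v). -/

import Mathlib

open Matrix

/-- Coercion of a real matrix to a complex matrix. -/
def coeM (M : Matrix (Fin 3) (Fin 3) ℝ) : Matrix (Fin 3) (Fin 3) ℂ :=
  M.map (fun x => (x : ℂ))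

/-- The hat map `v ↦ v^`, sending `v ∈ ℝ³` to the antisymmetric matrix with
`v^ w = v × w`. -/
def hatMap (v : Fin 3 → ℝ) : Matrix (Fin 3) (Fin 3) ℝ :=
  !![0, -v 2, v 1; v 2, 0, -v 0; -v 1, v 0, 0]

/-- The gradient `∇V` of `V : ℝ³ → ℝ`. -/
noncomputable def grad (V : (Fin 3 → ℝ) → ℝ) (x : Fin 3 → ℝ) : Fin 3 → ℝ :=
  fun i => fderiv ℝ V x (Pi.single i 1)

/-- The Hessian matrix `∇²V` of `V : ℝ³ → ℝ`. -/
noncomputable def hess (V : (Fin 3 → ℝ) → ℝ) (x : Fin 3 → ℝ) :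
    Matrix (Fin 3) (Fin 3) ℝ :=
  Matrix.of fun i j =>
    fderiv ℝ (fun y => fderiv ℝ V y (Pi.single j 1)) x (Pi.single i 1)

/-!
Differentiating `𝒥 = q^ P - p^ Q` along the flow gives
`m⁻¹ p^ P - q^ ∇²V(q) Q + (∇V(q))^ Q - m⁻¹ p^ P`, so everything reduces to the identity
`x^ ∇²V(x) = (∇V(x))^`. Its `i`-th row is the infinitesimal form of the equivariance
`∇V(Rx) = R ∇V(x)` along the one-parameter subgroup `R = exp (s e_i^)`, which lies in `SO(3)`
because `e_i^` is skew-symmetric.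
-/

open NormedSpace

section SkewGenerators

variable {n : Type*} [Fintype n] [DecidableEq n]

theorem transpose_exp_mul_exp_of_transpose_eq_neg {A : Matrix n n ℝ} (hA : Aᵀ = -A) :
    (exp A)ᵀ * exp A = 1 := by
  rw [← exp_transpose, hA, ← Matrix.exp_add_of_commute _ _ (Commute.neg_left (Commute.refl A)),
    neg_add_cancel, exp_zero]

theorem det_exp_of_transpose_eq_neg {A : Matrix n n ℝ} (hA : Aᵀ = -A) : (exp A).det = 1 := by
  have hsq : (exp A).det ^ 2 = 1 := by
    simpa [sq] using congrArg det (transpose_exp_mul_exp_of_transpose_eq_neg hA)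
  -- `exp A` is the square of `exp (A / 2)`, so its determinant cannot be `-1`.
  have hnonneg : 0 ≤ (exp A).det := by
    have hhalf : exp A = exp ((1 / 2 : ℝ) • A) * exp ((1 / 2 : ℝ) • A) := by
      rw [← Matrix.exp_add_of_commute _ _ (Commute.refl _), ← add_smul]
      norm_num
    rw [hhalf, det_mul]
    exact mul_self_nonneg _
  nlinarith

attribute [local instance] Matrix.linftyOpNormedRing Matrix.linftyOpNormedAlgebra in
theorem hasDerivAt_exp_smul_mulVec (A : Matrix n n ℝ) (v : n → ℝ) :
    HasDerivAt (fun s : ℝ => exp (s • A) *ᵥ v) (A *ᵥ v) 0 := by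
  let L : Matrix n n ℝ →ₗ[ℝ] n → ℝ :=
    { toFun := fun M => M *ᵥ v
      map_add' := fun M N => add_mulVec M N v
      map_smul' := fun c M => smul_mulVec c M v }
  have h := (LinearMap.toContinuousLinearMap L).hasFDerivAt.comp_hasDerivAt 0
    (hasDerivAt_exp_smul_const A (0 : ℝ))
  rwa [zero_smul, exp_zero, one_mul] at h

theorem ContinuousLinearMap.apply_eq_dotProduct_single (φ : (n → ℝ) →L[ℝ] ℝ) (w : n → ℝ) :
    φ w = w ⬝ᵥ fun l => φ (Pi.single l 1) := by
  conv_lhs => rw [pi_eq_sum_univ' w]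
  simp [dotProduct]

theorem fderiv_mulVec_apply_of_invariant {V : (n → ℝ) → ℝ} {R : Matrix n n ℝ} {x : n → ℝ}
    (hV : DifferentiableAt ℝ V (R *ᵥ x)) (hR : R * Rᵀ = 1) (hinv : ∀ y, V (R *ᵥ y) = V y)
    (w : n → ℝ) : fderiv ℝ V (R *ᵥ x) w = fderiv ℝ V x (Rᵀ *ᵥ w) := by
  have hcomp :
      HasFDerivAt V ((fderiv ℝ V (R *ᵥ x)).comp (mulVecLin R).toContinuousLinearMap) x := by
    have h := hV.hasFDerivAt.comp x (mulVecLin R).toContinuousLinearMap.hasFDerivAt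
    rwa [show V ∘ R.mulVec = V from funext hinv] at h
  rw [hcomp.fderiv]
  simp [mulVec_mulVec, hR]

theorem fderiv_fderiv_apply_mulVec_of_transpose_eq_neg {V : (n → ℝ) → ℝ} (hV : ContDiff ℝ 2 V)
    (hinv : ∀ R : Matrix n n ℝ, Rᵀ * R = 1 → R.det = 1 → ∀ x, V (R *ᵥ x) = V x)
    {A : Matrix n n ℝ} (hA : Aᵀ = -A) (x w : n → ℝ) :
    fderiv ℝ (fun y => fderiv ℝ V y w) x (A *ᵥ x) = fderiv ℝ V x (Aᵀ *ᵥ w) := by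
  have hskew : ∀ s : ℝ, (s • A)ᵀ = -(s • A) := fun s => by rw [transpose_smul, hA, smul_neg]
  have hrot : ∀ s : ℝ, fderiv ℝ V (exp (s • A) *ᵥ x) w = fderiv ℝ V x (exp (s • Aᵀ) *ᵥ w) := by
    intro s
    rw [← transpose_smul, exp_transpose]
    exact fderiv_mulVec_apply_of_invariant ((hV.differentiable two_ne_zero) _)
      (mul_eq_one_comm.mp (transpose_exp_mul_exp_of_transpose_eq_neg (hskew s)))
      (hinv _ (transpose_exp_mul_exp_of_transpose_eq_neg (hskew s))
        (det_exp_of_transpose_eq_neg (hskew s))) w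
  have hsecond : Differentiable ℝ fun y => fderiv ℝ V y w :=
    ((hV.fderiv_right (m := 1) one_add_one_eq_two.le).clm_apply contDiff_const).differentiable
      one_ne_zero
  have hleft := (hsecond x).hasFDerivAt.comp_hasDerivAt_of_eq 0 (hasDerivAt_exp_smul_mulVec A x)
    (by simp)
  have hright := (fderiv ℝ V x).hasFDerivAt.comp_hasDerivAt 0 (hasDerivAt_exp_smul_mulVec Aᵀ w)
  exact hleft.unique (by simpa only [Function.comp_def, hrot] using hright)

end SkewGenerators

theorem hatMap_apply_eq_mulVec (v : Fin 3 → ℝ) (i : Fin 3) :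
    hatMap v i = hatMap (Pi.single i 1) *ᵥ v := by
  ext l
  fin_cases i <;> fin_cases l <;> simp [hatMap, mulVec, dotProduct, Fin.sum_univ_three]

theorem transpose_hatMap (v : Fin 3 → ℝ) : (hatMap v)ᵀ = -hatMap v := by
  ext i j
  fin_cases i <;> fin_cases j <;> simp [hatMap]

theorem fderiv_apply_eq_dotProduct_grad (V : (Fin 3 → ℝ) → ℝ) (x w : Fin 3 → ℝ) :
    fderiv ℝ V x w = w ⬝ᵥ grad V x :=
  (fderiv ℝ V x).apply_eq_dotProduct_single w

theorem fderiv_fderiv_apply_eq_vecMul_hess (V : (Fin 3 → ℝ) → ℝ) (x w : Fin 3 → ℝ) (j : Fin 3) :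
    fderiv ℝ (fun y => fderiv ℝ V y (Pi.single j 1)) x w = (w ᵥ* hess V x) j :=
  (fderiv ℝ (fun y => fderiv ℝ V y (Pi.single j 1)) x).apply_eq_dotProduct_single w

theorem hatMap_mul_hess_of_invariant {V : (Fin 3 → ℝ) → ℝ} (hV : ContDiff ℝ 2 V)
    (hinv : ∀ R : Matrix (Fin 3) (Fin 3) ℝ, Rᵀ * R = 1 → R.det = 1 → ∀ x, V (R *ᵥ x) = V x)
    (x : Fin 3 → ℝ) : hatMap x * hess V x = hatMap (grad V x) := by
  ext i j
  have h := fderiv_fderiv_apply_mulVec_of_transpose_eq_neg hV hinv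
    (transpose_hatMap (Pi.single i 1)) x (Pi.single j 1)
  rw [fderiv_fderiv_apply_eq_vecMul_hess, ← hatMap_apply_eq_mulVec,
    fderiv_apply_eq_dotProduct_grad, mulVec_transpose, ← dotProduct_mulVec,
    ← hatMap_apply_eq_mulVec, single_one_dotProduct] at h
  rwa [mul_apply_eq_vecMul]

section EntrywiseDerivatives

variable {l k o : Type*} [Fintype k] {𝔸 : Type*} [NormedCommRing 𝔸] [NormedAlgebra ℝ 𝔸]

theorem hasDerivAt_matrix_mul_apply {A : ℝ → Matrix l k 𝔸} {B : ℝ → Matrix k o 𝔸}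
    {A' : Matrix l k 𝔸} {B' : Matrix k o 𝔸} {t : ℝ}
    (hA : ∀ i j, HasDerivAt (fun s => A s i j) (A' i j) t)
    (hB : ∀ i j, HasDerivAt (fun s => B s i j) (B' i j) t) (i : l) (j : o) :
    HasDerivAt (fun s => (A s * B s) i j) ((A' * B t + A t * B') i j) t := by
  simp only [mul_apply, Matrix.add_apply, ← Finset.sum_add_distrib]
  exact HasDerivAt.fun_sum fun r _ => (hA i r).fun_mul (hB r j)

end EntrywiseDerivatives

theorem hasDerivAt_coeM_hatMap_apply {v : ℝ → Fin 3 → ℝ} {v' : Fin 3 → ℝ} {t : ℝ}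
    (hv : ∀ i, HasDerivAt (fun s => v s i) (v' i) t) (i j : Fin 3) :
    HasDerivAt (fun s => coeM (hatMap (v s)) i j) (coeM (hatMap v') i j) t := by
  refine HasDerivAt.ofReal_comp ?_
  simp only [hatMap_apply_eq_mulVec _ i, mulVec, dotProduct]
  exact HasDerivAt.fun_sum fun l _ => (hv l).const_mul _

theorem hatMap_smul (c : ℝ) (v : Fin 3 → ℝ) : hatMap (c • v) = c • hatMap v := by
  ext i j
  fin_cases i <;> fin_cases j <;> simp [hatMap]

theorem hatMap_neg (v : Fin 3 → ℝ) : hatMap (-v) = -hatMap v := by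
  ext i j
  fin_cases i <;> fin_cases j <;> simp [hatMap]

theorem coeM_smul (c : ℝ) (M : Matrix (Fin 3) (Fin 3) ℝ) : coeM (c • M) = (c : ℂ) • coeM M := by
  ext i j
  simp [coeM]

theorem coeM_neg (M : Matrix (Fin 3) (Fin 3) ℝ) : coeM (-M) = -coeM M := by
  ext i j
  simp [coeM]

theorem coeM_mul (M N : Matrix (Fin 3) (Fin 3) ℝ) : coeM (M * N) = coeM M * coeM N :=
  Matrix.map_mul (f := Complex.ofRealHom)

theorem hagedorn_angular_momentum_conserved_general (m : ℝ)
    (V : (Fin 3 → ℝ) → ℝ) (hV : ContDiff ℝ 2 V)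
    (hVinv : ∀ R : Matrix (Fin 3) (Fin 3) ℝ, Rᵀ * R = 1 → R.det = 1 →
      ∀ x, V (R.mulVec x) = V x)
    (q p : ℝ → (Fin 3 → ℝ))
    (Q P : ℝ → Matrix (Fin 3) (Fin 3) ℂ)
    (hq : ∀ t i, HasDerivAt (fun s => q s i) (p t i / m) t)
    (hp : ∀ t i, HasDerivAt (fun s => p s i) (-(grad V (q t) i)) t)
    (hQ : ∀ t i j, HasDerivAt (fun s => Q s i j) ((P t i j) / (m : ℂ)) t)
    (hP : ∀ t i j, HasDerivAt (fun s => P s i j)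
      ((-(coeM (hess V (q t)) * Q t)) i j) t) :
    ∀ t i j, HasDerivAt
      (fun s => (coeM (hatMap (q s)) * P s - coeM (hatMap (p s)) * Q s) i j) 0 t := by
  intro t i j
  have hq' : ∀ i, HasDerivAt (fun s => q s i) ((m⁻¹ • p t) i) t := fun i => by
    simpa [div_eq_inv_mul] using hq t i
  have hQ' : ∀ i j, HasDerivAt (fun s => Q s i j) (((m : ℂ)⁻¹ • P t) i j) t := fun i j => by
    simpa [div_eq_inv_mul] using hQ t i j
  have hkey : coeM (hatMap (q t)) * coeM (hess V (q t)) = coeM (hatMap (grad V (q t))) := by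
    rw [← coeM_mul, hatMap_mul_hess_of_invariant hV hVinv]
  have h := (hasDerivAt_matrix_mul_apply (hasDerivAt_coeM_hatMap_apply hq') (hP t) i j).fun_sub
    (hasDerivAt_matrix_mul_apply (hasDerivAt_coeM_hatMap_apply (v' := -grad V (q t)) (hp t))
      hQ' i j)
  refine h.congr_deriv ?_
  -- `hkey` cancels the two `Q`-terms; both `P`-terms are `m⁻¹ p^ P`.
  rw [← Matrix.sub_apply, hatMap_smul, hatMap_neg, coeM_smul, coeM_neg, mul_neg, neg_mul,
    ← Matrix.mul_assoc, hkey, smul_mul_assoc, mul_smul_comm, Complex.ofReal_inv,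
    add_comm (_ • _), sub_self, Matrix.zero_apply]

/-- Along solutions of Hagedorn's equations `q̇ = p/m`, `ṗ = −∇V(q)`,
`Q̇ = P/m`, `Ṗ = −∇²V(q)Q` in dimension `d = 3` with `V` rotationally invariant, the
complex matrix `𝒥(t) = q(t)^ P(t) − p(t)^ Q(t)` is constant in `t`. -/
theorem hagedorn_angular_momentum_conserved (m : ℝ) (hm : 0 < m)
    (V : (Fin 3 → ℝ) → ℝ) (hV : ContDiff ℝ 2 V)
    (hVinv : ∀ R : Matrix (Fin 3) (Fin 3) ℝ, Rᵀ * R = 1 → R.det = 1 →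
      ∀ x, V (R.mulVec x) = V x)
    (q p : ℝ → (Fin 3 → ℝ))
    (Q P : ℝ → Matrix (Fin 3) (Fin 3) ℂ)
    (hq : ∀ t i, HasDerivAt (fun s => q s i) (p t i / m) t)
    (hp : ∀ t i, HasDerivAt (fun s => p s i) (-(grad V (q t) i)) t)
    (hQ : ∀ t i j, HasDerivAt (fun s => Q s i j) ((P t i j) / (m : ℂ)) t)
    (hP : ∀ t i j, HasDerivAt (fun s => P s i j)
      ((-(coeM (hess V (q t)) * Q t)) i j) t) :
    ∀ t i j, HasDerivAt
      (fun s => (coeM (hatMap (q s)) * P s - coeM (hatMap (p s)) * Q s) i j) 0 t :=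
  hagedorn_angular_momentum_conserved_general m V hV hVinv q p Q P hq hp hQ hP
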